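/- For all ℓ, ℓ₃ ∈ {1,…,q} with ℓ₃ ≠ ℓ, the constructible special point data of level 3 with q nodes whose node labels are (ℓ,ℓ,ℓ₃) are exactly the following six: ((ℓ,ℓ,ℓ₃),((1,1,1),(1,1,2),(1,2,2),(2,1,2))), ((ℓ,ℓ,ℓ₃),((1,1,1),(1,2,1),(1,2,2),(2,1,2))), ((ℓ,ℓ,ℓ₃),((1,1,1),(1,2,1),(2,1,1),(2,1,2))), ((ℓ,ℓ,ℓ₃),((1,2,1),(1,2,2),(2,1,2),(2,2,2))), ((ℓ,ℓ,ℓ₃),((1,2,1),(2,1,1),(2,1,2),(2,2,2))), and ((ℓ,ℓ,ℓ₃),((1,2,1),(2,1,1),(2,2,1),(2,2,2))). -/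

import Mathlib

/-!
At level 1 the only datum is `((1), (2))`. All labels of `(ℓ)` equal `ℓ`, so `<_ℓ` puts `(2)`
before `(1)`, and inserting at `h = 1, 2` gives exactly two level-2 data for `(ℓ, ℓ)`. Since `ℓ₃`
does not occur among the labels `(ℓ, ℓ)`, `<_ℓ₃` is the lexicographic order with `1 < 2`; sorting
each level-2 datum lexicographically and inserting at `h = 1, 2, 3` gives the six data. The sorted
reordering in each step is unique because `<_ℓ` is asymmetric, so no other data arise.
-/

/-- The relation `u <_ℓ u'` on `{1,2}^d`, relative to node labels `lab : Fin d → ℕ`. -/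
def ltNode {d : ℕ} (lab : Fin d → ℕ) (ℓ : ℕ) (u u' : Fin d → ℕ) : Prop :=
  (∃ k₀ : Fin d, lab k₀ = ℓ ∧ u k₀ = 2 ∧ u' k₀ = 1 ∧
      ∀ k : Fin d, k₀ < k → lab k = ℓ → u k = u' k) ∨
  ((∀ k : Fin d, lab k = ℓ → u k = u' k) ∧
    ∃ k₀ : Fin d, lab k₀ ≠ ℓ ∧ u k₀ = 1 ∧ u' k₀ = 2 ∧
      ∀ k : Fin d, k < k₀ → u k = u' k)

/-- Constructible special point data of level `d` with `q` nodes. -/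
inductive Constructible (q : ℕ) :
    (d : ℕ) → (Fin d → ℕ) → (Fin (d + 1) → Fin d → ℕ) → Prop
  | base (ℓ : ℕ) (h1 : 1 ≤ ℓ) (hq : ℓ ≤ q) :
      Constructible q 1 (fun _ => ℓ) ![![1], ![2]]
  | step {d : ℕ} {lab : Fin d → ℕ} {u : Fin (d + 1) → Fin d → ℕ}
      (hR : Constructible q d lab u) (ℓ : ℕ) (h1 : 1 ≤ ℓ) (hq : ℓ ≤ q)
      (v : Fin (d + 1) → Fin d → ℕ) (σ : Equiv.Perm (Fin (d + 1)))
      (hv : ∀ j, v j = u (σ j))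
      (hsort : ∀ i j : Fin (d + 1), i < j → ltNode lab ℓ (v i) (v j))
      (h : ℕ) (hh1 : 1 ≤ h) (hh2 : h ≤ d + 1) :
      Constructible q (d + 1) (Fin.snoc lab ℓ)
        (fun j : Fin (d + 2) =>
          if hj : (j : ℕ) < h then Fin.snoc (v ⟨(j : ℕ), by omega⟩) 1
          else Fin.snoc (v ⟨(j : ℕ) - 1, by omega⟩) 2)

/-- `a^ℓ_u(R)`: the number of `k` with `ℓ_k = ℓ` and `u(k) = 2`. -/
def aCount {d : ℕ} (lab : Fin d → ℕ) (ℓ : ℕ) (u : Fin d → ℕ) : ℕ :=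
  (Finset.univ.filter (fun k : Fin d => lab k = ℓ ∧ u k = 2)).card

/-- `|a_u(R)|`: the number of `k` with `u(k) = 2`. -/
def aTot {d : ℕ} (u : Fin d → ℕ) : ℕ :=
  (Finset.univ.filter (fun k : Fin d => u k = 2)).card

/-- Lexicographic order on tuples, comparing at the smallest coordinate where they differ. -/
def lexLt {d : ℕ} (u u' : Fin d → ℕ) : Prop :=
  ∃ k₀ : Fin d, (∀ k : Fin d, k < k₀ → u k = u' k) ∧ u k₀ < u' k₀

theorem ltNode_asymm {d : ℕ} {lab : Fin d → ℕ} {ℓ : ℕ} {u u' : Fin d → ℕ}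
    (h : ltNode lab ℓ u u') : ¬ ltNode lab ℓ u' u := by
  rintro (⟨k₁, hl₁, h₁, h₁', hk₁⟩ | ⟨hsame', k₁, hl₁, h₁, h₁', hk₁⟩) <;>
    rcases h with ⟨k₀, hl₀, h₀, h₀', hk₀⟩ | ⟨hsame, k₀, hl₀, h₀, h₀', hk₀⟩
  · rcases lt_trichotomy k₀ k₁ with hlt | rfl | hlt
    · have := hk₀ k₁ hlt hl₁; omega
    · omega
    · have := hk₁ k₀ hlt hl₀; omega
  · have := hsame k₁ hl₁; omega
  · have := hsame' k₀ hl₀; omega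
  · rcases lt_trichotomy k₀ k₁ with hlt | rfl | hlt
    · have := hk₁ k₀ hlt; omega
    · omega
    · have := hk₀ k₁ hlt; omega

instance {d : ℕ} {lab : Fin d → ℕ} {ℓ : ℕ} : Std.Asymm (ltNode lab ℓ) :=
  ⟨fun _ _ => ltNode_asymm⟩

theorem ltNode_iff_of_forall_eq {d : ℕ} {lab : Fin d → ℕ} {ℓ : ℕ} (hlab : ∀ k, lab k = ℓ)
    {u u' : Fin d → ℕ} :
    ltNode lab ℓ u u' ↔ ∃ k₀, u k₀ = 2 ∧ u' k₀ = 1 ∧ ∀ k, k₀ < k → u k = u' k := by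
  simp only [ltNode, hlab, true_and, forall_const, ne_eq, not_true_eq_false, false_and,
    exists_false, and_false, or_false]

theorem ltNode_iff_of_forall_ne {d : ℕ} {lab : Fin d → ℕ} {ℓ : ℕ} (hlab : ∀ k, lab k ≠ ℓ)
    {u u' : Fin d → ℕ} :
    ltNode lab ℓ u u' ↔ ∃ k₀, u k₀ = 1 ∧ u' k₀ = 2 ∧ ∀ k, k < k₀ → u k = u' k := by
  simp only [ltNode, hlab, false_and, exists_false, false_or, IsEmpty.forall_iff,
    implies_true, ne_eq, not_false_eq_true, true_and]

def IsSortedReordering {α : Type*} (r : α → α → Prop) {n : ℕ} (u v : Fin n → α) : Prop :=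
  (∃ σ : Equiv.Perm (Fin n), ∀ j, v j = u (σ j)) ∧ ∀ i j, i < j → r (v i) (v j)

theorem IsSortedReordering.unique {α : Type*} {r : α → α → Prop} [Std.Asymm r] {n : ℕ}
    {u v w : Fin n → α} (hv : IsSortedReordering r u v) (hw : IsSortedReordering r u w) :
    v = w := by
  obtain ⟨⟨σ, hσ⟩, hv_sorted⟩ := hv
  obtain ⟨⟨τ, hτ⟩, hw_sorted⟩ := hw
  set π := σ.trans τ.symm
  have hπ : ∀ j, v j = w (π j) := fun j => by simp [π, hσ, hτ]
  have hmono : StrictMono π := by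
    intro i j hij
    rcases lt_trichotomy (π i) (π j) with hlt | heq | hlt
    · exact hlt
    · exact absurd (π.injective heq) hij.ne
    · have := hw_sorted _ _ hlt
      rw [← hπ, ← hπ] at this
      exact absurd this (asymm (hv_sorted i j hij))
  have hid : π = Equiv.refl _ := by
    have := Subsingleton.elim (hmono.orderIsoOfSurjective π π.surjective) (OrderIso.refl _)
    ext j
    exact congrArg Fin.val (DFunLike.congr_fun this j)
  funext j
  simpa [hid] using hπ j

def extendRows {d : ℕ} (v : Fin (d + 1) → Fin d → ℕ) (h : ℕ) (hh : h ≤ d + 1) :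
    Fin (d + 2) → Fin (d + 1) → ℕ :=
  fun j => if hj : (j : ℕ) < h then Fin.snoc (v ⟨j, by omega⟩) 1
    else Fin.snoc (v ⟨(j : ℕ) - 1, by omega⟩) 2

theorem constructible_one_iff {q : ℕ} {lab : Fin 1 → ℕ} {u : Fin 2 → Fin 1 → ℕ} :
    Constructible q 1 lab u ↔ 1 ≤ lab 0 ∧ lab 0 ≤ q ∧ u = ![![1], ![2]] := by
  constructor
  · rintro (⟨ℓ, h1, hq⟩ | ⟨hR⟩)
    · exact ⟨h1, hq, rfl⟩
    · cases hR
  · rintro ⟨h1, hq, rfl⟩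
    have hlab : lab = fun _ => lab 0 := funext fun k => congrArg lab (Subsingleton.elim k 0)
    rw [hlab]
    exact .base _ h1 hq

theorem constructible_snoc_iff {q d : ℕ} {lab : Fin (d + 1) → ℕ} {ℓ : ℕ}
    (h1 : 1 ≤ ℓ) (hq : ℓ ≤ q) {u' : Fin (d + 3) → Fin (d + 2) → ℕ} :
    Constructible q (d + 2) (Fin.snoc (α := fun _ => ℕ) lab ℓ) u' ↔
      ∃ u, Constructible q (d + 1) lab u ∧ ∃ v, IsSortedReordering (ltNode lab ℓ) u v ∧
        ∃ h, 1 ≤ h ∧ ∃ hh : h ≤ d + 2, u' = extendRows v h hh := by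
  constructor
  · generalize hlab' : (Fin.snoc lab ℓ : Fin (d + 2) → ℕ) = lab'
    rintro (_ | ⟨hR, _, _, _, v, σ, hσ, hsorted, h, hh1, hh2⟩)
    obtain ⟨rfl, rfl⟩ := Fin.snoc_injective2 hlab'
    exact ⟨_, hR, v, ⟨⟨σ, hσ⟩, hsorted⟩, h, hh1, hh2, rfl⟩
  · rintro ⟨u, hR, v, ⟨⟨σ, hσ⟩, hsorted⟩, h, hh1, hh2, rfl⟩
    exact .step hR ℓ h1 hq v σ hσ hsorted h hh1 hh2

theorem constructible_two_iff {q ℓ : ℕ} (h1 : 1 ≤ ℓ) (hq : ℓ ≤ q) {u : Fin 3 → Fin 2 → ℕ} :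
    Constructible q 2 ![ℓ, ℓ] u ↔
      u = ![![2, 1], ![2, 2], ![1, 2]] ∨ u = ![![2, 1], ![1, 1], ![1, 2]] := by
  have hsorted : IsSortedReordering (ltNode ![ℓ] ℓ) ![![1], ![2]] ![![2], ![1]] := by
    refine ⟨⟨Equiv.swap 0 1, by decide⟩, fun i j hij => ?_⟩
    rw [ltNode_iff_of_forall_eq fun k => by fin_cases k; rfl]
    revert i j; decide
  rw [show (![ℓ, ℓ] : Fin 2 → ℕ) = Fin.snoc ![ℓ] ℓ by ext k; fin_cases k <;> rfl,
    constructible_snoc_iff h1 hq]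
  constructor
  · rintro ⟨u₁, hu₁, v, hv, h, hh1, hh2, rfl⟩
    obtain ⟨-, -, rfl⟩ := constructible_one_iff.1 hu₁
    obtain rfl := hv.unique hsorted
    interval_cases h <;> decide +revert
  · have hu₁ : Constructible q 1 ![ℓ] ![![1], ![2]] := constructible_one_iff.2 ⟨h1, hq, rfl⟩
    rintro (rfl | rfl)
    exacts [⟨_, hu₁, _, hsorted, 1, le_rfl, by norm_num, by decide⟩,
      ⟨_, hu₁, _, hsorted, 2, by norm_num, le_rfl, by decide⟩]

theorem constructible_level_three_distinct_label_general (q : ℕ)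
    (ℓ ℓ₃ : ℕ) (hℓ1 : 1 ≤ ℓ) (hℓq : ℓ ≤ q) (hℓ₃1 : 1 ≤ ℓ₃) (hℓ₃q : ℓ₃ ≤ q)
    (hne : ℓ₃ ≠ ℓ) (u : Fin 4 → Fin 3 → ℕ) :
    Constructible q 3 ![ℓ, ℓ, ℓ₃] u ↔
      (u = ![![1, 1, 1], ![1, 1, 2], ![1, 2, 2], ![2, 1, 2]] ∨
       u = ![![1, 1, 1], ![1, 2, 1], ![1, 2, 2], ![2, 1, 2]] ∨
       u = ![![1, 1, 1], ![1, 2, 1], ![2, 1, 1], ![2, 1, 2]] ∨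
       u = ![![1, 2, 1], ![1, 2, 2], ![2, 1, 2], ![2, 2, 2]] ∨
       u = ![![1, 2, 1], ![2, 1, 1], ![2, 1, 2], ![2, 2, 2]] ∨
       u = ![![1, 2, 1], ![2, 1, 1], ![2, 2, 1], ![2, 2, 2]]) := by
  have hlab : ∀ k, (![ℓ, ℓ] : Fin 2 → ℕ) k ≠ ℓ₃ := by intro k; fin_cases k <;> exact hne.symm
  have hsorted₁ : IsSortedReordering (ltNode ![ℓ, ℓ] ℓ₃)
      ![![2, 1], ![2, 2], ![1, 2]] ![![1, 2], ![2, 1], ![2, 2]] :=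
    ⟨⟨(finRotate 3).symm, by decide⟩, fun i j hij =>
      (ltNode_iff_of_forall_ne hlab).2 (by revert i j; decide)⟩
  have hsorted₂ : IsSortedReordering (ltNode ![ℓ, ℓ] ℓ₃)
      ![![2, 1], ![1, 1], ![1, 2]] ![![1, 1], ![1, 2], ![2, 1]] :=
    ⟨⟨finRotate 3, by decide⟩, fun i j hij =>
      (ltNode_iff_of_forall_ne hlab).2 (by revert i j; decide)⟩
  rw [show (![ℓ, ℓ, ℓ₃] : Fin 3 → ℕ) = Fin.snoc ![ℓ, ℓ] ℓ₃ by ext k; fin_cases k <;> rfl,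
    constructible_snoc_iff hℓ₃1 hℓ₃q]
  constructor
  · rintro ⟨u₂, hu₂, v, hv, h, hh1, hh2, rfl⟩
    rcases (constructible_two_iff hℓ1 hℓq).1 hu₂ with rfl | rfl
    · obtain rfl := hv.unique hsorted₁
      interval_cases h <;> decide +revert
    · obtain rfl := hv.unique hsorted₂
      interval_cases h <;> decide +revert
  · have hR₁ := (constructible_two_iff hℓ1 hℓq).2 (Or.inl rfl)
    have hR₂ := (constructible_two_iff hℓ1 hℓq).2 (Or.inr rfl)
    rintro (rfl | rfl | rfl | rfl | rfl | rfl)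
    exacts [⟨_, hR₂, _, hsorted₂, 1, le_rfl, by norm_num, by decide⟩,
      ⟨_, hR₂, _, hsorted₂, 2, by norm_num, by norm_num, by decide⟩,
      ⟨_, hR₂, _, hsorted₂, 3, by norm_num, le_rfl, by decide⟩,
      ⟨_, hR₁, _, hsorted₁, 1, le_rfl, by norm_num, by decide⟩,
      ⟨_, hR₁, _, hsorted₁, 2, by norm_num, by norm_num, by decide⟩,
      ⟨_, hR₁, _, hsorted₁, 3, by norm_num, le_rfl, by decide⟩]

/-- For all `ℓ, ℓ₃ ∈ {1,…,q}` with `ℓ₃ ≠ ℓ`, the constructible special point data of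
level 3 with `q` nodes whose node labels are `(ℓ,ℓ,ℓ₃)` are exactly the six listed
tuples. -/
theorem constructible_level_three_distinct_label (q : ℕ) (hq : 1 ≤ q)
    (ℓ ℓ₃ : ℕ) (hℓ1 : 1 ≤ ℓ) (hℓq : ℓ ≤ q) (hℓ₃1 : 1 ≤ ℓ₃) (hℓ₃q : ℓ₃ ≤ q)
    (hne : ℓ₃ ≠ ℓ) (u : Fin 4 → Fin 3 → ℕ) :
    Constructible q 3 ![ℓ, ℓ, ℓ₃] u ↔
      (u = ![![1, 1, 1], ![1, 1, 2], ![1, 2, 2], ![2, 1, 2]] ∨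
       u = ![![1, 1, 1], ![1, 2, 1], ![1, 2, 2], ![2, 1, 2]] ∨
       u = ![![1, 1, 1], ![1, 2, 1], ![2, 1, 1], ![2, 1, 2]] ∨
       u = ![![1, 2, 1], ![1, 2, 2], ![2, 1, 2], ![2, 2, 2]] ∨
       u = ![![1, 2, 1], ![2, 1, 1], ![2, 1, 2], ![2, 2, 2]] ∨
       u = ![![1, 2, 1], ![2, 1, 1], ![2, 2, 1], ![2, 2, 2]]) :=
  constructible_level_three_distinct_label_general q ℓ ℓ₃ hℓ1 hℓq hℓ₃1 hℓ₃q hne u
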